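/- arXiv:1806.10833 — 2 statements merged into one kernel-verified Lean document; each statement's English description precedes it below -/
import Mathlib

section
/- Let Γ_f = (V, σ, η) be a truncated submodular profit cooperative game. If the core C(Γ_f) is nonempty and Γ_f has no veto player, then σ is additive: σ(S) = Σ_{i∈S} σ({i}) for every subset S ⊆ V. -/
/-!
Let `m i = σ V - σ (V \ {i})` be the marginal value of `i` at the top. By submodularity every
marginal value of `i` is at least `m i`, so adding the players of `S` one at a time to any
disjoint `B` gives `σ B + ∑_{i ∈ S} m i ≤ σ (B ∪ S)`; in particular `∑ m ≤ σ V`. Without a veto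
player every `V \ {i}` reaches the threshold, so a core allocation satisfies `x i ≤ m i`, whence
`σ V = ∑ x ≤ ∑ m` and the telescoping inequality is tight. Applied to `(∅, S)` and
`(S, V \ S)` it then forces `σ S = ∑_{i ∈ S} m i` for every `S`, so `σ` is additive.
-/

open Finset

def IsSubmodular {V : Type*} [DecidableEq V] (σ : Finset V → ℝ) : Prop :=
  ∀ (S T : Finset V) (u : V), S ⊆ T → u ∉ T → σ (insert u T) - σ T ≤ σ (insert u S) - σ S

def topMarginal {V : Type*} [Fintype V] [DecidableEq V] (σ : Finset V → ℝ) (i : V) : ℝ :=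
  σ univ - σ (univ.erase i)

theorem le_topMarginal_of_le_sum_erase {V : Type*} [Fintype V] [DecidableEq V]
    {σ : Finset V → ℝ} {x : V → ℝ} (hx : ∑ j, x j = σ univ) {i : V}
    (hi : σ (univ.erase i) ≤ ∑ j ∈ univ.erase i, x j) : x i ≤ topMarginal σ i := by
  have := sum_erase_add univ x (mem_univ i)
  unfold topMarginal
  linarith

namespace IsSubmodular

variable {V : Type*} [Fintype V] [DecidableEq V] {σ : Finset V → ℝ}

theorem topMarginal_le_marginal (hσ : IsSubmodular σ) {i : V} {T : Finset V} (hi : i ∉ T) :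
    topMarginal σ i ≤ σ (insert i T) - σ T := by
  have h := hσ T (univ.erase i) i (subset_erase.2 ⟨subset_univ T, hi⟩) (notMem_erase i univ)
  rwa [insert_erase (mem_univ i)] at h

theorem add_sum_topMarginal_le (hσ : IsSubmodular σ) (B : Finset V) {S : Finset V}
    (hSB : Disjoint S B) : σ B + ∑ i ∈ S, topMarginal σ i ≤ σ (B ∪ S) := by
  induction S using Finset.induction_on with
  | empty => simp
  | @insert a S ha ih =>
    rw [disjoint_insert_left] at hSB
    have hstep := hσ.topMarginal_le_marginal (i := a) (T := B ∪ S) (by simp [ha, hSB.1])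
    rw [union_insert, sum_insert ha]
    linarith [ih hSB.2]

theorem eq_add_sum_topMarginal (hσ : IsSubmodular σ)
    (htop : σ univ - σ ∅ ≤ ∑ i, topMarginal σ i) (S : Finset V) :
    σ S = σ ∅ + ∑ i ∈ S, topMarginal σ i := by
  have hlower := hσ.add_sum_topMarginal_le ∅ (disjoint_empty_right S)
  have hupper := hσ.add_sum_topMarginal_le S (sdiff_disjoint (s := S) (t := univ))
  have hsplit := sum_sdiff (f := topMarginal σ) (subset_univ S)
  rw [empty_union] at hlower
  rw [union_sdiff_of_subset (subset_univ S)] at hupper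
  linarith

theorem eq_sum_singleton (hσ : IsSubmodular σ) (hempty : σ ∅ = 0)
    (htop : σ univ ≤ ∑ i, topMarginal σ i) (S : Finset V) :
    σ S = ∑ i ∈ S, σ {i} := by
  have hσS := hσ.eq_add_sum_topMarginal (by rwa [hempty, sub_zero])
  rw [hσS S, hempty, zero_add]
  refine sum_congr rfl fun i _ => ?_
  rw [hσS {i}, sum_singleton, hempty, zero_add]

end IsSubmodular

theorem core_nonempty_no_veto_additive_general {V : Type*} [Fintype V] [DecidableEq V]
    (σ : Finset V → ℝ) (η : ℝ)
    (hmono : ∀ S T : Finset V, S ⊆ T → σ S ≤ σ T)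
    (hsub : ∀ (S T : Finset V) (u : V), S ⊆ T → u ∉ T →
      σ (insert u T) - σ T ≤ σ (insert u S) - σ S)
    (hempty : σ ∅ = 0)
    (f : Finset V → ℝ)
    (hf : ∀ S : Finset V, f S = if η ≤ σ S then σ S else 0)
    (hcore : ∃ x : V → ℝ, (∑ i, x i) = σ univ ∧ ∀ S : Finset V, f S ≤ ∑ i ∈ S, x i)
    (hnoveto : ¬ ∃ i : V, ∀ S : Finset V, i ∉ S → σ S < η) :
    ∀ S : Finset V, σ S = ∑ i ∈ S, σ {i} := by
  obtain ⟨x, hxV, hxS⟩ := hcore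
  push Not at hnoveto
  have hcoalition (i : V) : σ (univ.erase i) ≤ ∑ j ∈ univ.erase i, x j := by
    obtain ⟨S, hiS, hηS⟩ := hnoveto i
    have hη : η ≤ σ (univ.erase i) := hηS.trans (hmono S _ (subset_erase.2 ⟨subset_univ S, hiS⟩))
    simpa [hf, hη] using hxS (univ.erase i)
  refine IsSubmodular.eq_sum_singleton hsub hempty ?_
  calc σ univ = ∑ i, x i := hxV.symm
    _ ≤ ∑ i, topMarginal σ i :=
      sum_le_sum fun i _ => le_topMarginal_of_le_sum_erase hxV (hcoalition i)

/-- If the core is nonempty and there is no veto player,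
then `σ` is additive. -/
theorem core_nonempty_no_veto_additive {V : Type*} [Fintype V] [DecidableEq V] [Nonempty V]
    (σ : Finset V → ℝ) (η : ℝ)
    (hmono : ∀ S T : Finset V, S ⊆ T → σ S ≤ σ T)
    (hsub : ∀ (S T : Finset V) (u : V), S ⊆ T → u ∉ T →
      σ (insert u T) - σ T ≤ σ (insert u S) - σ S)
    (hempty : σ ∅ = 0) (hη0 : 0 ≤ η) (hη1 : η ≤ σ univ)
    (f : Finset V → ℝ)
    (hf : ∀ S : Finset V, f S = if η ≤ σ S then σ S else 0)
    (hcore : ∃ x : V → ℝ, (∑ i, x i) = σ univ ∧ ∀ S : Finset V, f S ≤ ∑ i ∈ S, x i)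
    (hnoveto : ¬ ∃ i : V, ∀ S : Finset V, i ∉ S → σ S < η) :
    ∀ S : Finset V, σ S = ∑ i ∈ S, σ {i} :=
  core_nonempty_no_veto_additive_general σ η hmono hsub hempty f hf hcore hnoveto
end

section
/- Let G be a finite simple graph with vertex set W and edge set E, and for S ⊆ W let σ(S) = 2(I(S) + C(S)). For every x ∈ ℝ^W with x_i ≥ 0 for all i and x(W) = 2|E|, and for every subset S ⊆ W, we have max_{T⊆W} (σ(T) − x(T)) ≥ C(S); in particular, every feasible value ε of the least-core program for (W, σ) satisfies ε ≥ max_{S⊆W} C(S). -/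
open Finset

/-- number of edges of `G` with both endpoints in `S` -/
noncomputable def edgesInside {W : Type*} (G : SimpleGraph W) (S : Finset W) : ℕ :=
  {e ∈ G.edgeSet | ∀ v ∈ e, v ∈ S}.ncard

/-- number of edges of `G` with exactly one endpoint in `S` (size of the cut) -/
noncomputable def cutSize {W : Type*} (G : SimpleGraph W) (S : Finset W) : ℕ :=
  {e ∈ G.edgeSet | (∃ v ∈ e, v ∈ S) ∧ ¬ (∀ v ∈ e, v ∈ S)}.ncard

/-- the profit function `σ(S) = 2(I(S) + C(S))` -/
noncomputable def sigmaCut {W : Type*} (G : SimpleGraph W) (S : Finset W) : ℝ :=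
  2 * ((edgesInside G S : ℝ) + (cutSize G S : ℝ))

lemma cutSize_compl {W : Type*} [Fintype W] [DecidableEq W] (G : SimpleGraph W) (S : Finset W) :
    cutSize G Sᶜ = cutSize G S := by
  unfold cutSize
  congr 1
  ext e
  simp only [Set.mem_setOf_eq, Finset.mem_compl]
  constructor
  · rintro ⟨he, h1, h2⟩
    push_neg at h2
    obtain ⟨w, hw, hwS⟩ := h2
    obtain ⟨v, hv, hvS⟩ := h1
    exact ⟨he, ⟨w, hw, hwS⟩, fun h => hvS (h v hv)⟩
  · rintro ⟨he, h1, h2⟩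
    push_neg at h2
    obtain ⟨w, hw, hwS⟩ := h2
    obtain ⟨v, hv, hvS⟩ := h1
    exact ⟨he, ⟨w, hw, hwS⟩, fun h => (h v hv) hvS⟩

lemma edge_partition {W : Type*} [Fintype W] [DecidableEq W] (G : SimpleGraph W) (S : Finset W) :
    edgesInside G S + cutSize G S + edgesInside G Sᶜ = G.edgeSet.ncard := by
  classical
  have hAC : edgesInside G S + cutSize G S
      = ({e ∈ G.edgeSet | ∃ v ∈ e, v ∈ S} : Set (Sym2 W)).ncard := by
    rw [edgesInside, cutSize, ← Set.ncard_union_eq]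
    · congr 1
      ext e
      simp only [Set.mem_union, Set.mem_setOf_eq]
      constructor
      · rintro (⟨he, h⟩ | ⟨he, h1, _⟩)
        · refine ⟨he, ?_⟩
          induction e using Sym2.ind with
          | _ a b => exact ⟨a, Sym2.mem_mk_left a b, h a (Sym2.mem_mk_left a b)⟩
        · exact ⟨he, h1⟩
      · rintro ⟨he, h1⟩
        by_cases h : ∀ v ∈ e, v ∈ S
        · exact Or.inl ⟨he, h⟩
        · exact Or.inr ⟨he, h1, h⟩
    · rw [Set.disjoint_left]
      rintro e ⟨_, h⟩ ⟨_, _, h2⟩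
      exact h2 h
  have hB : ∀ v : W, v ∈ Sᶜ ↔ v ∉ S := fun v => Finset.mem_compl
  rw [hAC, edgesInside, ← Set.ncard_union_eq]
  · congr 1
    ext e
    simp only [Set.mem_union, Set.mem_setOf_eq, Finset.mem_compl]
    constructor
    · rintro (⟨he, _⟩ | ⟨he, _⟩) <;> exact he
    · intro he
      by_cases h : ∃ v ∈ e, v ∈ S
      · exact Or.inl ⟨he, h⟩
      · push_neg at h
        exact Or.inr ⟨he, h⟩
  · rw [Set.disjoint_left]
    rintro e ⟨_, v, hv, hvS⟩ ⟨_, h⟩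
    simp only [Finset.mem_compl] at h
    exact h v hv hvS

/-- For every nonnegative allocation `x` with `x(W) = 2|E|`
and every `S ⊆ W`, the maximum dissatisfaction `max_T (σ(T) − x(T))` is at least
the cut value `C(S)`; in particular, every feasible value `ε` of the least-core
program for `(W, σ)` satisfies `ε ≥ max_S C(S)`. -/
theorem maxdis_ge_cut {W : Type*} [Fintype W] [Nonempty W] (G : SimpleGraph W)
    (x : W → ℝ) (hx : ∀ i, 0 ≤ x i)
    (hsum : (∑ i, x i) = 2 * (G.edgeSet.ncard : ℝ)) :
    (∀ S : Finset W, (cutSize G S : ℝ) ≤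
        Finset.univ.sup' Finset.univ_nonempty
          (fun T : Finset W => sigmaCut G T - ∑ i ∈ T, x i)) ∧
    (∀ ε : ℝ, (∀ T : Finset W, sigmaCut G T - ε ≤ ∑ i ∈ T, x i) →
      ∀ S : Finset W, (cutSize G S : ℝ) ≤ ε) := by
  classical
  have key : ∀ S : Finset W,
      (sigmaCut G S - ∑ i ∈ S, x i) + (sigmaCut G Sᶜ - ∑ i ∈ Sᶜ, x i)
        = 2 * (cutSize G S : ℝ) := by
    intro S
    have hpart := edge_partition G S
    have hcc := cutSize_compl G S
    have hsplit : (∑ i ∈ S, x i) + (∑ i ∈ Sᶜ, x i) = ∑ i, x i :=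
      Finset.sum_add_sum_compl S x
    have : (edgesInside G S : ℝ) + (cutSize G S : ℝ) + (edgesInside G Sᶜ : ℝ)
        = (G.edgeSet.ncard : ℝ) := by exact_mod_cast congrArg (Nat.cast : ℕ → ℝ) hpart
    rw [sigmaCut, sigmaCut, hcc]
    rw [hsum] at hsplit
    linarith
  constructor
  · intro S
    set f : Finset W → ℝ := fun T => sigmaCut G T - ∑ i ∈ T, x i with hf
    have h1 : f S ≤ Finset.univ.sup' Finset.univ_nonempty f :=
      Finset.le_sup' f (Finset.mem_univ S)
    have h2 : f Sᶜ ≤ Finset.univ.sup' Finset.univ_nonempty f :=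
      Finset.le_sup' f (Finset.mem_univ Sᶜ)
    have := key S
    simp only [hf] at this h1 h2 ⊢
    linarith
  · intro ε hε S
    have h1 := hε S
    have h2 := hε Sᶜ
    have := key S
    linarith
end
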